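/- arXiv:1310.4985 — 6 statements merged into one kernel-verified Lean document; each statement's English description precedes it below -/
import Mathlib

section
/- For distinct nonzero complex numbers t_1,...,t_n and a nonzero complex number s distinct from all t_i, we have: sum over i of (product over j≠i of t_j/(t_i - t_j)) times t_i/(s - t_i) equals product over i of t_i/(s - t_i). -/
open Finset

/-- Partial fraction identity:
`∑ i (∏_{j≠i} t_j/(t_i - t_j)) · t_i/(s - t_i) = ∏ i t_i/(s - t_i)`
for distinct nonzero complex numbers `s, t_1, …, t_n`. -/
theorem sum_prod_partial_fraction' (n : ℕ) (hn : 0 < n) (t : Fin n → ℂ) (s : ℂ)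
    (ht : ∀ i, t i ≠ 0) (hs : s ≠ 0) (hinj : Function.Injective t)
    (hst : ∀ i, s ≠ t i) :
    ∑ i, (∏ j ∈ univ.erase i, t j / (t i - t j)) * (t i / (s - t i))
      = ∏ i, t i / (s - t i) := by
  have hinjOn : Set.InjOn t (univ : Finset (Fin n)) := fun a _ b _ h => hinj h
  haveI : Nonempty (Fin n) := Fin.pos_iff_nonempty.mp hn
  have hne : (univ : Finset (Fin n)).Nonempty := univ_nonempty
  have hb := Lagrange.sum_basis hinjOn hne
  have heval := congrArg (Polynomial.eval s) hb
  rw [Polynomial.eval_finset_sum, Polynomial.eval_one] at heval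
  have hevalb : ∀ i : Fin n, Polynomial.eval s (Lagrange.basis univ t i)
      = ∏ j ∈ univ.erase i, ((t i - t j)⁻¹ * (s - t j)) := by
    intro i
    simp [Lagrange.basis, Lagrange.basisDivisor, Polynomial.eval_prod]
  have hsub : ∀ i j : Fin n, j ≠ i → t i - t j ≠ 0 := fun i j h =>
    sub_ne_zero.mpr (fun hq => h (hinj hq.symm))
  have hssub : ∀ j : Fin n, s - t j ≠ 0 := fun j => sub_ne_zero.mpr (hst j)
  have key : ∀ i : Fin n, (∏ j ∈ univ.erase i, t j / (t i - t j)) * (t i / (s - t i))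
      = (∏ j, t j / (s - t j)) * Polynomial.eval s (Lagrange.basis univ t i) := by
    intro i
    rw [hevalb i, ← mul_prod_erase univ _ (mem_univ i)]
    rw [prod_div_distrib, prod_div_distrib, prod_mul_distrib, prod_inv_distrib]
    have hB : (∏ j ∈ univ.erase i, (t i - t j)) ≠ 0 :=
      prod_ne_zero_iff.mpr fun j hj => hsub i j (mem_erase.mp hj).1
    have hC : (∏ j ∈ univ.erase i, (s - t j)) ≠ 0 :=
      prod_ne_zero_iff.mpr fun j _ => hssub j
    generalize (∏ j ∈ univ.erase i, t j) = A at *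
    generalize hBe : (∏ j ∈ univ.erase i, (t i - t j)) = B at *
    generalize hCe : (∏ j ∈ univ.erase i, (s - t j)) = C at *
    have hD := hssub i
    field_simp
  calc ∑ i, (∏ j ∈ univ.erase i, t j / (t i - t j)) * (t i / (s - t i))
      = ∑ i, (∏ j, t j / (s - t j)) * Polynomial.eval s (Lagrange.basis univ t i) := by
        exact Finset.sum_congr rfl fun i _ => key i
    _ = (∏ j, t j / (s - t j)) * ∑ i, Polynomial.eval s (Lagrange.basis univ t i) := by
        rw [mul_sum]
    _ = ∏ i, t i / (s - t i) := by rw [heval, mul_one]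
end

section
/- For distinct nonzero complex numbers t_1,...,t_n and s distinct from all t_i: sum over i of (product over j≠i of t_i/(t_i - t_j)) times (s/(s - t_i))^2 equals (1 + sum over j of t_j/(s - t_j)) times product over i of s/(s - t_i). -/
/-!
Write `cᵢ = ∏_{j ≠ i} tᵢ / (tᵢ - tⱼ) = tᵢ ^ (n - 1) wᵢ`, with `wᵢ` the nodal weights of the nodes
`tᵢ`. The first barycentric form of the Lagrange interpolant of `X ^ (n - 1)` is then the partial
fraction expansion `∑ cᵢ x / (x - tᵢ) = ∏ x / (x - tᵢ)`, valid for `x` off the nodes. Since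
`(s / (s - a))² = s / (s - a) + s a / (s - a)²`, the identity is this expansion at `x = s` minus `s`
times its derivative there, the derivative of the product being given by the product rule.
-/

open Finset Polynomial Lagrange

section Field

variable {K : Type*} [Field K] {ι : Type*} [Fintype ι] [DecidableEq ι]

def partialFractionCoeff (t : ι → K) (i : ι) : K :=
  ∏ j ∈ univ.erase i, t i / (t i - t j)

theorem partialFractionCoeff_eq_pow_mul_nodalWeight (t : ι → K) (i : ι) :
    partialFractionCoeff t i = t i ^ (Fintype.card ι - 1) * nodalWeight univ t i := by
  rw [partialFractionCoeff, nodalWeight, ← card_univ, ← card_erase_of_mem (mem_univ i),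
    ← prod_const, ← prod_mul_distrib]
  simp only [div_eq_mul_inv]

theorem sum_partialFractionCoeff_mul_div_sub [Nonempty ι] {t : ι → K} (ht : Function.Injective t)
    {x : K} (hx : ∀ i, x ≠ t i) :
    ∑ i, partialFractionCoeff t i * (x / (x - t i)) = ∏ i, x / (x - t i) := by
  set m := Fintype.card ι - 1
  have hdeg : (X ^ m : K[X]).degree < (#(univ : Finset ι) : ℕ) := by
    rw [degree_X_pow, card_univ]
    exact_mod_cast Nat.sub_lt Fintype.card_pos one_pos
  have hinterp : x ^ m = (∏ i, (x - t i)) * ∑ i, nodalWeight univ t i * (x - t i)⁻¹ * t i ^ m := by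
    have := congrArg (eval x) (eq_interpolate ht.injOn hdeg)
    simpa only [eval_interpolate_not_at_node _ fun i _ => hx i, eval_nodal, eval_pow, eval_X]
      using this
  have hprod : ∏ i, (x - t i) ≠ 0 := prod_ne_zero_iff.2 fun i _ => sub_ne_zero.2 (hx i)
  calc ∑ i, partialFractionCoeff t i * (x / (x - t i))
      = x * ∑ i, nodalWeight univ t i * (x - t i)⁻¹ * t i ^ m := by
        rw [mul_sum]
        refine sum_congr rfl fun i _ => ?_
        rw [partialFractionCoeff_eq_pow_mul_nodalWeight]
        ring
    _ = x * x ^ m / ∏ i, (x - t i) := by rw [hinterp, mul_div_assoc, mul_div_cancel_left₀ _ hprod]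
    _ = ∏ i, x / (x - t i) := by
        rw [prod_div_distrib, prod_const, card_univ, ← pow_succ',
          Nat.sub_add_cancel Fintype.card_pos]

theorem mul_sum_prod_erase_mul_div_sub_sq {t : ι → K} {s : K} (hs : ∀ i, s ≠ t i) :
    s * ∑ i, (∏ j ∈ univ.erase i, s / (s - t j)) * (t i / (s - t i) ^ 2)
      = (∏ i, s / (s - t i)) * ∑ i, t i / (s - t i) := by
  rw [mul_sum, mul_sum]
  refine sum_congr rfl fun i _ => ?_
  have := sub_ne_zero.2 (hs i)
  rw [← mul_prod_erase univ _ (mem_univ i)]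
  field_simp

end Field

section NormedField

variable {𝕜 : Type*} [NontriviallyNormedField 𝕜] {ι : Type*} [Fintype ι] [DecidableEq ι]

theorem hasDerivAt_div_sub (a : 𝕜) {s : 𝕜} (hs : s ≠ a) :
    HasDerivAt (fun x => x / (x - a)) (-a / (s - a) ^ 2) s := by
  refine ((hasDerivAt_id' (x := s)).fun_div ((hasDerivAt_id' (x := s)).sub_const a)
    (sub_ne_zero.2 hs)).congr_deriv ?_
  ring

theorem sum_partialFractionCoeff_mul_div_sub_sq [Nonempty ι] {t : ι → 𝕜}
    (ht : Function.Injective t) {s : 𝕜} (hs : ∀ i, s ≠ t i) :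
    ∑ i, partialFractionCoeff t i * (t i / (s - t i) ^ 2)
      = ∑ i, (∏ j ∈ univ.erase i, s / (s - t j)) * (t i / (s - t i) ^ 2) := by
  have hsum := HasDerivAt.fun_sum (u := univ) fun i _ =>
    (hasDerivAt_div_sub (t i) (hs i)).const_mul (partialFractionCoeff t i)
  have hprod := HasDerivAt.fun_finsetProd (u := univ) fun i _ => hasDerivAt_div_sub (t i) (hs i)
  have heq : (fun x => ∑ i, partialFractionCoeff t i * (x / (x - t i)))
      =ᶠ[nhds s] fun x => ∏ i, x / (x - t i) := by
    have hopen : (Set.range t)ᶜ ∈ nhds s :=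
      (Set.finite_range t).isClosed.isOpen_compl.mem_nhds fun ⟨i, hi⟩ => hs i hi.symm
    filter_upwards [hopen] with x hx
    exact sum_partialFractionCoeff_mul_div_sub ht fun i hi => hx ⟨i, hi.symm⟩
  have := hsum.unique (hprod.congr_of_eventuallyEq heq)
  simpa only [neg_div, mul_neg, smul_eq_mul, sum_neg_distrib, neg_inj] using this

end NormedField

theorem sum_prod_partial_fraction_sq_general (n : ℕ) (hn : 0 < n) (t : Fin n → ℂ) (s : ℂ)
    (hinj : Function.Injective t)
    (hst : ∀ i, s ≠ t i) :
    ∑ i, (∏ j ∈ univ.erase i, t i / (t i - t j)) * (s / (s - t i)) ^ 2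
      = (1 + ∑ j, t j / (s - t j)) * ∏ i, s / (s - t i) := by
  have : Nonempty (Fin n) := ⟨⟨0, hn⟩⟩
  have hsq : ∀ i, (s / (s - t i)) ^ 2 = s / (s - t i) + s * (t i / (s - t i) ^ 2) := fun i => by
    field_simp [sub_ne_zero.2 (hst i)]
    ring
  change ∑ i, partialFractionCoeff t i * _ = _
  simp_rw [hsq, mul_add, sum_add_distrib, mul_left_comm _ s, ← mul_sum,
    sum_partialFractionCoeff_mul_div_sub hinj hst, sum_partialFractionCoeff_mul_div_sub_sq hinj hst,
    mul_sum_prod_erase_mul_div_sub_sq hst]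
  ring

/-- Partial fraction identity with a square:
`∑ i (∏_{j≠i} t_i/(t_i - t_j)) · (s/(s - t_i))² =
  (1 + ∑ j t_j/(s - t_j)) · ∏ i s/(s - t_i)`
for distinct nonzero complex numbers `s, t_1, …, t_n`. -/
theorem sum_prod_partial_fraction_sq (n : ℕ) (hn : 0 < n) (t : Fin n → ℂ) (s : ℂ)
    (ht : ∀ i, t i ≠ 0) (hs : s ≠ 0) (hinj : Function.Injective t)
    (hst : ∀ i, s ≠ t i) :
    ∑ i, (∏ j ∈ univ.erase i, t i / (t i - t j)) * (s / (s - t i)) ^ 2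
      = (1 + ∑ j, t j / (s - t j)) * ∏ i, s / (s - t i) :=
  sum_prod_partial_fraction_sq_general n hn t s hinj hst
end

section
/- Let t_1,...,t_n be distinct nonzero complex numbers and a_1,...,a_n each equal to 1 or 2. Let I(1) = {i : a_i = 1} and I(2) = {i : a_i = 2}. Then for any s distinct from all t_i: product over i of (s/(s - t_i))^{a_i} equals [sum over i in I(1) of (product over j≠i of (t_i/(t_i - t_j))^{a_j}) · s/(s - t_i)] plus [sum over i in I(2) of (product over j≠i of (t_i/(t_i - t_j))^{a_j}) · (s·t_i/(s - t_i)^2 + (1 + sum over j≠i of a_j·t_j/(t_j - t_i)) · s/(s - t_i))]. -/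
/-!
Clearing denominators, the identity says `X ^ N = ∑ i, P i` with `N = ∑ i, a i`, where `P i` is
`X` times `∏ j ≠ i, (X - t j) ^ a j` times a factor of degree `a i - 1`. The difference has degree
at most `N`, vanishes at `0`, and vanishes to order `a i` at each `t i`: the weights
`∏ j ≠ i, (t i / (t i - t j)) ^ a j` make the values agree, and for `a i = 2` the corrections
`B i = ∑ j ≠ i, a j t j / (t j - t i)` make the derivatives agree, through the identity
`t i * ∑ j ≠ i, a j / (t i - t j) + B i = ∑ j ≠ i, a j`. Being divisible by
`X * ∏ i, (X - t i) ^ a i`, of degree `N + 1`, the difference is zero.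
-/

open Finset Polynomial

namespace Polynomial

variable {K ι : Type*} [Field K]

theorem X_sub_C_sq_dvd_of_isRoot_of_isRoot_derivative {p : K[X]} {c : K} (h : p.IsRoot c)
    (h' : (derivative p).IsRoot c) : (X - C c) ^ 2 ∣ p := by
  rcases eq_or_ne p 0 with rfl | hp
  · exact dvd_zero _
  · exact (le_rootMultiplicity_iff hp).1 ((one_lt_rootMultiplicity_iff_isRoot hp).2 ⟨h, h'⟩)

theorem eval_derivative_prod_X_sub_C_pow [DecidableEq ι] (s : Finset ι) (t : ι → K) (a : ι → ℕ)
    {x : K} (hx : ∀ j ∈ s, x ≠ t j) :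
    (derivative (∏ j ∈ s, (X - C (t j)) ^ a j)).eval x
      = (∏ j ∈ s, (x - t j) ^ a j) * ∑ j ∈ s, (a j : K) / (x - t j) := by
  rw [derivative_prod_finset, eval_finsetSum, mul_sum]
  refine sum_congr rfl fun j hj => ?_
  have hxj : x - t j ≠ 0 := sub_ne_zero.2 (hx j hj)
  rw [derivative_X_sub_C_pow, ← mul_prod_erase s _ hj]
  simp only [eval_mul, eval_prod, eval_pow, eval_sub, eval_X, eval_C]
  rcases a j with _ | k
  · simp
  · rw [Nat.add_sub_cancel, pow_succ]
    field_simp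

theorem natDegree_prod_X_sub_C_pow (s : Finset ι) (t : ι → K) (a : ι → ℕ) :
    (∏ j ∈ s, (X - C (t j)) ^ a j).natDegree = ∑ j ∈ s, a j := by
  rw [natDegree_prod_of_monic _ _ fun j _ => (monic_X_sub_C _).pow _]
  simp only [natDegree_pow, natDegree_X_sub_C, mul_one]

end Polynomial

noncomputable section

namespace PartialFraction

variable {K ι : Type*} [Field K] [Fintype ι] [DecidableEq ι] (t : ι → K) (a : ι → ℕ)

def weight (i : ι) : K := ∏ j ∈ univ.erase i, (t i / (t i - t j)) ^ a j

def correction (i : ι) : K := ∑ j ∈ univ.erase i, (a j : K) * t j / (t j - t i)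

def cofactor (i : ι) : K[X] := ∏ j ∈ univ.erase i, (X - C (t j)) ^ a j

/-- For `a i = 2` the `i`-th summand `A (s t/(s - t)^2 + (1 + B) s/(s - t))` of the decomposition
equals `A s (s + B (s - t)) / (s - t)^2`. -/
def localFactor (i : ι) : K[X] := if a i = 1 then 1 else X + C (correction t a i) * (X - C (t i))

/-- `numerator t a i / ∏ j, (X - C (t j)) ^ a j` is the `i`-th summand of the decomposition. -/
def numerator (i : ι) : K[X] := C (weight t a i) * X * cofactor t a i * localFactor t a i

variable {t a}

theorem eval_cofactor (i : ι) (x : K) :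
    (cofactor t a i).eval x = ∏ j ∈ univ.erase i, (x - t j) ^ a j := by
  simp [cofactor, eval_prod]

theorem weight_mul_eval_cofactor (hinj : Function.Injective t) (k : ι) :
    weight t a k * (cofactor t a k).eval (t k) = t k ^ ∑ j ∈ univ.erase k, a j := by
  rw [eval_cofactor, weight, ← prod_mul_distrib, ← prod_pow_eq_pow_sum]
  refine prod_congr rfl fun j hj => ?_
  have hkj : t k - t j ≠ 0 := sub_ne_zero.2 (hinj.ne (ne_of_mem_erase hj).symm)
  rw [div_pow, div_mul_cancel₀ _ (pow_ne_zero _ hkj)]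

theorem X_sub_C_dvd_X_pow_sub_numerator_of_eq_one (hinj : Function.Injective t) {k : ι}
    (hk : a k = 1) : X - C (t k) ∣ X ^ ∑ i, a i - numerator t a k := by
  rw [dvd_iff_isRoot, IsRoot, ← add_sum_erase _ _ (mem_univ k), hk]
  simp only [numerator, localFactor, if_pos hk, eval_sub, eval_pow, eval_mul, eval_C, eval_X,
    mul_one]
  rw [mul_right_comm, weight_mul_eval_cofactor hinj]
  ring

theorem mul_sum_div_sub_add_correction (hinj : Function.Injective t) (k : ι) :
    t k * ∑ j ∈ univ.erase k, (a j : K) / (t k - t j) + correction t a k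
      = ∑ j ∈ univ.erase k, (a j : K) := by
  rw [correction, mul_sum, ← sum_add_distrib]
  refine sum_congr rfl fun j hj => ?_
  have hkj : t k - t j ≠ 0 := sub_ne_zero.2 (hinj.ne (ne_of_mem_erase hj).symm)
  have hjk : t j - t k ≠ 0 := sub_ne_zero.2 (hinj.ne (ne_of_mem_erase hj))
  field_simp
  ring

theorem X_sub_C_sq_dvd_X_pow_sub_numerator_of_eq_two (hinj : Function.Injective t) {k : ι}
    (hk : a k = 2) : (X - C (t k)) ^ 2 ∣ X ^ ∑ i, a i - numerator t a k := by
  set m := ∑ j ∈ univ.erase k, a j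
  have hN : ∑ i, a i = m + 2 := by rw [← add_sum_erase _ _ (mem_univ k), hk, add_comm]
  have hne : ∀ j ∈ univ.erase k, t k ≠ t j := fun j hj => hinj.ne (ne_of_mem_erase hj).symm
  have hwQ : weight t a k * (cofactor t a k).eval (t k) = t k ^ m :=
    weight_mul_eval_cofactor hinj k
  have hwQ' : weight t a k * (derivative (cofactor t a k)).eval (t k)
      = t k ^ m * ∑ j ∈ univ.erase k, (a j : K) / (t k - t j) := by
    rw [cofactor, eval_derivative_prod_X_sub_C_pow _ _ _ hne, ← eval_cofactor, ← mul_assoc,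
      hwQ]
  have hlog : t k * ∑ j ∈ univ.erase k, (a j : K) / (t k - t j) + correction t a k = (m : K) := by
    rw [mul_sum_div_sub_add_correction hinj, Nat.cast_sum]
  refine X_sub_C_sq_dvd_of_isRoot_of_isRoot_derivative ?_ ?_
  · simp only [hN, numerator, localFactor, if_neg (by omega : a k ≠ 1), IsRoot, eval_sub,
      eval_pow, eval_mul, eval_add, eval_C, eval_X, sub_self, mul_zero, add_zero]
    linear_combination (-(t k) ^ 2) * hwQ
  · simp only [hN, numerator, localFactor, if_neg (by omega : a k ≠ 1), IsRoot, derivative_sub,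
      derivative_X_pow, derivative_mul, derivative_add, derivative_C, derivative_X,
      eval_sub, eval_pow, eval_mul, eval_add, eval_C, eval_X, sub_self, mul_zero, add_zero,
      zero_mul, zero_add, eval_one, eval_zero, mul_one]
    push_cast
    linear_combination (-(2 * t k + t k * correction t a k)) * hwQ - t k ^ 2 * hwQ'
      - t k ^ (m + 1) * hlog

theorem X_sub_C_pow_dvd_numerator_of_ne {i k : ι} (hik : i ≠ k) :
    (X - C (t k)) ^ a k ∣ numerator t a i :=
  ((dvd_prod_of_mem _ (mem_erase.2 ⟨hik.symm, mem_univ k⟩)).mul_left _).mul_right _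

theorem X_sub_C_pow_dvd_X_pow_sub_sum_numerator (ha : ∀ i, a i = 1 ∨ a i = 2)
    (hinj : Function.Injective t) (k : ι) :
    (X - C (t k)) ^ a k ∣ X ^ ∑ i, a i - ∑ i, numerator t a i := by
  rw [← add_sum_erase univ (numerator t a) (mem_univ k), ← sub_sub]
  refine dvd_sub ?_ (dvd_sum fun i hi => X_sub_C_pow_dvd_numerator_of_ne (ne_of_mem_erase hi))
  rcases ha k with hk | hk
  · rw [hk, pow_one]
    exact X_sub_C_dvd_X_pow_sub_numerator_of_eq_one hinj hk
  · rw [hk]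
    exact X_sub_C_sq_dvd_X_pow_sub_numerator_of_eq_two hinj hk

theorem natDegree_localFactor_le {i : ι} (hi : a i = 1 ∨ a i = 2) :
    (localFactor t a i).natDegree ≤ a i - 1 := by
  rcases hi with hi | hi
  · simp [localFactor, hi]
  · rw [localFactor, if_neg (by omega), hi]
    compute_degree

theorem natDegree_numerator_le (ha : ∀ i, a i = 1 ∨ a i = 2) (i : ι) :
    (numerator t a i).natDegree ≤ ∑ j, a j := by
  refine (natDegree_mul_le_of_le (natDegree_mul_le_of_le (natDegree_mul_le_of_le
    (natDegree_C _).le natDegree_X_le) (natDegree_prod_X_sub_C_pow _ t a).le)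
    (natDegree_localFactor_le (ha i))).trans ?_
  rw [← add_sum_erase _ _ (mem_univ i)]
  have := ha i
  omega

theorem X_pow_eq_sum_numerator [Nonempty ι] (ha : ∀ i, a i = 1 ∨ a i = 2) (ht : ∀ i, t i ≠ 0)
    (hinj : Function.Injective t) : X ^ ∑ i, a i = ∑ i, numerator t a i := by
  have hN : ∑ i, a i ≠ 0 := by
    obtain ⟨i⟩ := ‹Nonempty ι›
    have := single_le_sum (fun j _ => Nat.zero_le (a j)) (mem_univ i)
    have := ha i
    omega
  have hcop : IsCoprime (X : K[X]) (∏ i, (X - C (t i)) ^ a i) := by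
    refine IsCoprime.prod_right fun i _ => IsCoprime.pow_right ?_
    have := isCoprime_X_sub_C_of_isUnit_sub (a := 0) (b := t i)
      (isUnit_iff_ne_zero.2 (by rw [zero_sub, neg_ne_zero]; exact ht i))
    rwa [C_0, sub_zero] at this
  have hdvd : X * ∏ i, (X - C (t i)) ^ a i ∣ X ^ ∑ i, a i - ∑ i, numerator t a i :=
    hcop.mul_dvd
      (dvd_sub (dvd_pow_self X hN)
        (dvd_sum fun i _ => ((dvd_mul_left X _).mul_right _).mul_right _))
      (Fintype.prod_dvd_of_coprime ((pairwise_coprime_X_sub_C hinj).mono fun _ _ h => h.pow)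
        (X_sub_C_pow_dvd_X_pow_sub_sum_numerator ha hinj))
  rw [← sub_eq_zero]
  refine eq_zero_of_dvd_of_natDegree_lt hdvd ?_
  have hmonic : (∏ i, (X - C (t i)) ^ a i).Monic :=
    monic_prod_of_monic _ _ fun i _ => (monic_X_sub_C _).pow _
  rw [natDegree_mul X_ne_zero hmonic.ne_zero, natDegree_X, natDegree_prod_X_sub_C_pow]
  refine (natDegree_sub_le_of_le (natDegree_X_pow_le _) (natDegree_sum_le_of_forall_le _ _
    fun i _ => natDegree_numerator_le ha i)).trans_lt ?_
  rw [max_self]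
  omega

theorem eval_numerator_div {s : K} (hst : ∀ j, s ≠ t j) (i : ι) :
    (numerator t a i).eval s / ∏ j, (s - t j) ^ a j
      = weight t a i * s * (localFactor t a i).eval s / (s - t i) ^ a i := by
  have hQ : ∏ j ∈ univ.erase i, (s - t j) ^ a j ≠ 0 :=
    prod_ne_zero_iff.2 fun j _ => pow_ne_zero _ (sub_ne_zero.2 (hst j))
  rw [← mul_prod_erase univ _ (mem_univ i), numerator, eval_mul, eval_mul, eval_mul, eval_C,
    eval_X, eval_cofactor]
  field_simp

theorem eval_numerator_div_of_eq_one {s : K} (hst : ∀ j, s ≠ t j) {i : ι} (hi : a i = 1) :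
    (numerator t a i).eval s / ∏ j, (s - t j) ^ a j = weight t a i * (s / (s - t i)) := by
  rw [eval_numerator_div hst, localFactor, if_pos hi, hi, eval_one]
  ring

theorem eval_numerator_div_of_eq_two {s : K} (hst : ∀ j, s ≠ t j) {i : ι} (hi : a i = 2) :
    (numerator t a i).eval s / ∏ j, (s - t j) ^ a j
      = weight t a i *
          (s * t i / (s - t i) ^ 2 + (1 + correction t a i) * (s / (s - t i))) := by
  have hsi : s - t i ≠ 0 := sub_ne_zero.2 (hst i)
  rw [eval_numerator_div hst, localFactor, if_neg (by omega), hi]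
  simp only [eval_add, eval_mul, eval_sub, eval_C, eval_X]
  field_simp
  ring

end PartialFraction

end

theorem prod_pow_decomposition_general (n : ℕ) (hn : 0 < n) (t : Fin n → ℂ) (s : ℂ)
    (a : Fin n → ℕ) (ha : ∀ i, a i = 1 ∨ a i = 2)
    (ht : ∀ i, t i ≠ 0) (hinj : Function.Injective t)
    (hst : ∀ i, s ≠ t i) :
    ∏ i, (s / (s - t i)) ^ a i
      = (∑ i ∈ univ.filter (fun i => a i = 1),
            (∏ j ∈ univ.erase i, (t i / (t i - t j)) ^ a j) * (s / (s - t i)))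
        + ∑ i ∈ univ.filter (fun i => a i = 2),
            (∏ j ∈ univ.erase i, (t i / (t i - t j)) ^ a j) *
              (s * t i / (s - t i) ^ 2
                + (1 + ∑ j ∈ univ.erase i, (a j : ℂ) * t j / (t j - t i))
                    * (s / (s - t i))) := by
  have : Nonempty (Fin n) := Fin.pos_iff_nonempty.mp hn
  have hfilter : univ.filter (fun i => ¬a i = 1) = univ.filter (fun i => a i = 2) :=
    filter_congr fun i _ => by rcases ha i with h | h <;> simp [h]
  calc ∏ i, (s / (s - t i)) ^ a i = s ^ (∑ i, a i) / ∏ i, (s - t i) ^ a i := by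
        simp only [div_pow, prod_div_distrib, prod_pow_eq_pow_sum]
    _ = ∑ i, (PartialFraction.numerator t a i).eval s / ∏ j, (s - t j) ^ a j := by
        rw [← sum_div, ← eval_finsetSum, ← PartialFraction.X_pow_eq_sum_numerator ha ht hinj,
          eval_pow, eval_X]
    _ = _ := by
        rw [← sum_filter_add_sum_filter_not _ (fun i => a i = 1), hfilter]
        congr 1 <;> refine sum_congr rfl fun i hi => ?_
        · exact PartialFraction.eval_numerator_div_of_eq_one hst (mem_filter.1 hi).2
        · exact PartialFraction.eval_numerator_div_of_eq_two hst (mem_filter.1 hi).2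

/-- Lemma 3.2, identity (3.5): for distinct nonzero `t_i`, exponents `a_i ∈ {1,2}` and
`s` distinct from all `t_i`,
`∏ i (s/(s-t_i))^{a_i}` decomposes as a sum over `I(1)` and `I(2)`. -/
theorem prod_pow_decomposition (n : ℕ) (hn : 0 < n) (t : Fin n → ℂ) (s : ℂ)
    (a : Fin n → ℕ) (ha : ∀ i, a i = 1 ∨ a i = 2)
    (ht : ∀ i, t i ≠ 0) (hs : s ≠ 0) (hinj : Function.Injective t)
    (hst : ∀ i, s ≠ t i) :
    ∏ i, (s / (s - t i)) ^ a i
      = (∑ i ∈ univ.filter (fun i => a i = 1),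
            (∏ j ∈ univ.erase i, (t i / (t i - t j)) ^ a j) * (s / (s - t i)))
        + ∑ i ∈ univ.filter (fun i => a i = 2),
            (∏ j ∈ univ.erase i, (t i / (t i - t j)) ^ a j) *
              (s * t i / (s - t i) ^ 2
                + (1 + ∑ j ∈ univ.erase i, (a j : ℂ) * t j / (t j - t i))
                    * (s / (s - t i))) :=
  prod_pow_decomposition_general n hn t s a ha ht hinj hst
end

section
/- With G(Q) as above, the linear map τ defined by τ(e_{ρ_i i, ρ_j j}) = (−1)^{1−δ_{ij}} e_{−ρ_j j, −ρ_i i} is an anti-involution of the associative algebra G(Q), i.e., τ(xy) = τ(y)τ(x) for all x, y and τ² = Id. -/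
open Finset

/-- An index `(ρ_i i, ρ_j j)` with signs `ρ, σ ∈ {±1}` and `i, j ∈ {1,…,N}`. -/
structure GIdx (N : ℕ) where
  ρ : ℤˣ
  i : Fin N
  σ : ℤˣ
  j : Fin N

/-- The weight `ρ_i ε_i - ρ_j ε_j ∈ ℤ^N` of an index. -/
def wt {N : ℕ} (p : GIdx N) : Fin N → ℤ :=
  Pi.single p.i (p.ρ : ℤ) - Pi.single p.j (p.σ : ℤ)

/-- The standard bilinear form on `ℤ^N`. -/
def form {N : ℕ} (α β : Fin N → ℤ) : ℤ := ∑ k, α k * β k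

/-- The index set `J = {(ρ_i i, ρ_j j) : ρ_i ε_i - ρ_j ε_j ∈ Q}`. -/
def JSet (N : ℕ) (Q : AddSubgroup (Fin N → ℤ)) := {p : GIdx N // wt p ∈ Q}

/-- The vector space `G(Q)` with basis indexed by `J`. -/
abbrev GAlg (N : ℕ) (Q : AddSubgroup (Fin N → ℤ)) := JSet N Q →₀ ℂ

/-- Product of two basis elements of `G(Q)`. -/
noncomputable def mulBasis {N : ℕ} {Q : AddSubgroup (Fin N → ℤ)}
    (ε : (Fin N → ℤ) → (Fin N → ℤ) → ℂ) (a b : JSet N Q) : GAlg N Q :=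
  if h : a.1.σ = b.1.ρ ∧ a.1.j = b.1.i then
    ε (wt a.1) (wt b.1) •
      Finsupp.single
        ⟨⟨a.1.ρ, a.1.i, b.1.σ, b.1.j⟩, by
          have hw : wt (⟨a.1.ρ, a.1.i, b.1.σ, b.1.j⟩ : GIdx N) = wt a.1 + wt b.1 := by
            simp only [wt, h.1, h.2]
            abel
          rw [hw]; exact Q.add_mem a.2 b.2⟩ 1
  else 0

/-- Bilinear extension of the basis product to all of `G(Q)`. -/
noncomputable def gMul {N : ℕ} {Q : AddSubgroup (Fin N → ℤ)}
    (ε : (Fin N → ℤ) → (Fin N → ℤ) → ℂ) (x y : GAlg N Q) : GAlg N Q :=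
  x.sum fun a ca => y.sum fun b cb => (ca * cb) • mulBasis ε a b

/-- The linear map `τ` with `τ(e_{ρ_i i, ρ_j j}) = (-1)^{1-δ_{ij}} e_{-ρ_j j, -ρ_i i}`. -/
noncomputable def gTau {N : ℕ} {Q : AddSubgroup (Fin N → ℤ)} (x : GAlg N Q) : GAlg N Q :=
  x.sum fun a c =>
    (c * (if a.1.i = a.1.j then 1 else -1)) •
      Finsupp.single
        ⟨⟨-a.1.σ, a.1.j, -a.1.ρ, a.1.i⟩, by
          have hw : wt (⟨-a.1.σ, a.1.j, -a.1.ρ, a.1.i⟩ : GIdx N) = wt a.1 := by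
            simp only [wt, Units.val_neg, Pi.single_neg]
            abel
          rw [hw]; exact a.2⟩ 1

/-!
On basis vectors `τ` is the index involution `(ρ_i i, ρ_j j) ↦ (-ρ_j j, -ρ_i i)` twisted by the
sign `s(i, j) = (-1)^{1-δ_{ij}}`, which is symmetric in `i, j` and squares to `1`; hence `τ² = Id`.

For anti-multiplicativity it suffices to compare `τ(e_a e_b)` with `τ(e_b) τ(e_a)` on basis vectors.
Both vanish unless `a = (ρ_i i, ρ_j j)` and `b = (ρ_j j, ρ_k k)` are composable, and then the
underlying indices agree, `τ(a b) = τ(b) τ(a)`, while the scalars are `ε(α, β) s(i, k)` and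
`s(i, j) s(j, k) ε(β, α)` with `α = wt a`, `β = wt b`. By the commutator relation
`ε(α, β) = (-1)^{⟨α, β⟩} ε(β, α)` this reduces to `(-1)^{⟨α, β⟩} s(i, k) = s(i, j) s(j, k)`,
which holds because `⟨α, β⟩ ≡ δ_{ij} + δ_{ik} + 1 + δ_{jk} (mod 2)`.
-/

theorem neg_one_zpow_sub {α : Type*} [DivisionMonoid α] [HasDistribNeg α] (m n : ℤ) :
    (-1 : α) ^ (m - n) = (-1) ^ m * (-1) ^ n := by
  simp only [neg_one_zpow_eq_ite, Int.even_sub]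
  split_ifs <;> simp_all

theorem neg_one_zpow_units {α : Type*} [DivisionMonoid α] [HasDistribNeg α] (u : ℤˣ) :
    (-1 : α) ^ (u : ℤ) = -1 := by
  rcases Int.units_eq_one_or u with rfl | rfl <;> simp

theorem form_eq_dotProduct {N : ℕ} (α β : Fin N → ℤ) : form α β = α ⬝ᵥ β := rfl

theorem neg_one_zpow_form_single {N : ℕ} (i j : Fin N) (r s : ℤˣ) :
    (-1 : ℂ) ^ form (Pi.single i (r : ℤ)) (Pi.single j (s : ℤ)) = if i = j then -1 else 1 := by
  rw [form_eq_dotProduct, single_dotProduct, Pi.single_apply]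
  split_ifs
  · rw [← Units.val_mul, neg_one_zpow_units]
  · simp

theorem neg_one_zpow_form_wt {N : ℕ} (a b : GIdx N) :
    (-1 : ℂ) ^ form (wt a) (wt b) =
      (if a.i = b.i then -1 else 1) * (if a.i = b.j then -1 else 1) *
        (if a.j = b.i then -1 else 1) * (if a.j = b.j then -1 else 1) := by
  simp only [wt, form_eq_dotProduct, sub_dotProduct, dotProduct_sub]
  simp only [← form_eq_dotProduct, neg_one_zpow_sub, neg_one_zpow_form_single]
  ring

namespace GIdx

variable {N : ℕ}

/-- The sign `(-1)^{1-δ_{ij}}` of the index `(ρ_i i, ρ_j j)`. -/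
def sign (p : GIdx N) : ℂ := if p.i = p.j then 1 else -1

theorem sign_mul_self (p : GIdx N) : p.sign * p.sign = 1 := by
  unfold sign; split_ifs <;> norm_num

def tau (p : GIdx N) : GIdx N := ⟨-p.σ, p.j, -p.ρ, p.i⟩

@[simp]
theorem tau_tau (p : GIdx N) : p.tau.tau = p := by
  simp [tau]

@[simp]
theorem sign_tau (p : GIdx N) : p.tau.sign = p.sign := by
  simp only [sign, tau, eq_comm]

@[simp]
theorem wt_tau (p : GIdx N) : wt p.tau = wt p := by
  simp only [wt, tau, Units.val_neg, Pi.single_neg]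
  abel

def Composable (p q : GIdx N) : Prop := p.σ = q.ρ ∧ p.j = q.i

theorem composable_tau_iff {p q : GIdx N} : Composable q.tau p.tau ↔ Composable p q := by
  simp only [Composable, tau, neg_inj]
  constructor <;> exact fun h => ⟨h.1.symm, h.2.symm⟩

def comp (p q : GIdx N) : GIdx N := ⟨p.ρ, p.i, q.σ, q.j⟩

theorem wt_comp {p q : GIdx N} (h : Composable p q) : wt (p.comp q) = wt p + wt q := by
  simp only [wt, comp, h.1, h.2]
  abel

theorem neg_one_zpow_form_wt_mul_sign_comp {p q : GIdx N} (h : p.j = q.i) :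
    (-1 : ℂ) ^ form (wt p) (wt q) * (p.comp q).sign = p.sign * q.sign := by
  rw [neg_one_zpow_form_wt, ← h]
  simp only [sign, comp]
  split_ifs <;> simp_all

end GIdx

namespace JSet

variable {N : ℕ} {Q : AddSubgroup (Fin N → ℤ)}

def tau (a : JSet N Q) : JSet N Q := ⟨a.1.tau, by rw [GIdx.wt_tau]; exact a.2⟩

@[simp]
theorem val_tau (a : JSet N Q) : a.tau.1 = a.1.tau := rfl

@[simp]
theorem tau_tau (a : JSet N Q) : a.tau.tau = a := Subtype.ext a.1.tau_tau

def comp (a b : JSet N Q) (h : a.1.Composable b.1) : JSet N Q :=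
  ⟨a.1.comp b.1, by rw [GIdx.wt_comp h]; exact Q.add_mem a.2 b.2⟩

@[simp]
theorem val_comp (a b : JSet N Q) (h : a.1.Composable b.1) : (a.comp b h).1 = a.1.comp b.1 := rfl

end JSet

section Algebra

open JSet

variable {N : ℕ} {Q : AddSubgroup (Fin N → ℤ)}

theorem gTau_single (a : JSet N Q) (c : ℂ) :
    gTau (Finsupp.single a c) = Finsupp.single a.tau (c * a.1.sign) := by
  rw [gTau, Finsupp.sum_single_index (by simp)]
  exact Finsupp.smul_single_one _ _

theorem gTau_zero : gTau (0 : GAlg N Q) = 0 := by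
  simp [gTau]

theorem gTau_add (x y : GAlg N Q) : gTau (x + y) = gTau x + gTau y :=
  Finsupp.sum_add_index' (by simp) fun _ _ _ => by rw [add_mul, add_smul]

theorem gTau_smul (c : ℂ) (x : GAlg N Q) : gTau (c • x) = c • gTau x := by
  rw [gTau, gTau, Finsupp.sum_smul_index' (by simp), Finsupp.smul_sum]
  simp only [smul_smul, smul_eq_mul, mul_assoc]

theorem gTau_gTau (x : GAlg N Q) : gTau (gTau x) = x := by
  induction x using Finsupp.induction_linear with
  | zero => rw [gTau_zero, gTau_zero]
  | add x y hx hy => rw [gTau_add, gTau_add, hx, hy]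
  | single a c =>
    rw [gTau_single, gTau_single, tau_tau, val_tau, GIdx.sign_tau, mul_assoc,
      GIdx.sign_mul_self, mul_one]

variable (ε : (Fin N → ℤ) → (Fin N → ℤ) → ℂ)

theorem mulBasis_of_composable {a b : JSet N Q} (h : a.1.Composable b.1) :
    mulBasis ε a b = Finsupp.single (a.comp b h) (ε (wt a.1) (wt b.1)) :=
  (dif_pos h).trans (Finsupp.smul_single_one _ _)

theorem mulBasis_of_not_composable {a b : JSet N Q} (h : ¬a.1.Composable b.1) :
    mulBasis ε a b = 0 :=
  dif_neg h

theorem gMul_single_single (a b : JSet N Q) (c d : ℂ) :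
    gMul ε (Finsupp.single a c) (Finsupp.single b d) = (c * d) • mulBasis ε a b := by
  rw [gMul, Finsupp.sum_single_index (by simp), Finsupp.sum_single_index (by simp)]

theorem gMul_zero_left (y : GAlg N Q) : gMul ε 0 y = 0 := by
  simp [gMul]

theorem gMul_zero_right (x : GAlg N Q) : gMul ε x 0 = 0 := by
  simp [gMul]

theorem gMul_add_left (x x' y : GAlg N Q) : gMul ε (x + x') y = gMul ε x y + gMul ε x' y := by
  refine Finsupp.sum_add_index' (by simp) fun _ _ _ => ?_
  simp only [add_mul, add_smul, Finsupp.sum_add]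

theorem gMul_add_right (x y y' : GAlg N Q) : gMul ε x (y + y') = gMul ε x y + gMul ε x y' := by
  rw [gMul, gMul, gMul, ← Finsupp.sum_add]
  congr 1
  funext a c
  exact Finsupp.sum_add_index' (by simp) fun _ _ _ => by rw [mul_add, add_smul]

theorem gTau_mulBasis (hcomm : ∀ α ∈ Q, ∀ β ∈ Q, ε α β = (-1 : ℂ) ^ form α β * ε β α)
    (a b : JSet N Q) :
    gTau (mulBasis ε a b) = (a.1.sign * b.1.sign) • mulBasis ε b.tau a.tau := by
  by_cases h : a.1.Composable b.1
  · rw [mulBasis_of_composable ε h, mulBasis_of_composable ε (GIdx.composable_tau_iff.2 h),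
      gTau_single, Finsupp.smul_single, smul_eq_mul]
    congr 1
    rw [val_tau, val_tau, GIdx.wt_tau, GIdx.wt_tau, hcomm _ a.2 _ b.2, val_comp]
    linear_combination ε (wt b.1) (wt a.1) * GIdx.neg_one_zpow_form_wt_mul_sign_comp h.2
  · rw [mulBasis_of_not_composable ε h, gTau_zero,
      mulBasis_of_not_composable ε (mt GIdx.composable_tau_iff.1 h), smul_zero]

theorem gTau_gMul (hcomm : ∀ α ∈ Q, ∀ β ∈ Q, ε α β = (-1 : ℂ) ^ form α β * ε β α)
    (x y : GAlg N Q) : gTau (gMul ε x y) = gMul ε (gTau y) (gTau x) := by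
  induction x using Finsupp.induction_linear with
  | zero => rw [gMul_zero_left, gTau_zero, gMul_zero_right]
  | add x x' hx hx' => rw [gMul_add_left, gTau_add, hx, hx', gTau_add, gMul_add_right]
  | single a c =>
    induction y using Finsupp.induction_linear with
    | zero => rw [gMul_zero_right, gTau_zero, gMul_zero_left]
    | add y y' hy hy' => rw [gMul_add_right, gTau_add, hy, hy', gTau_add, gMul_add_left]
    | single b d =>
      rw [gMul_single_single, gTau_smul, gTau_mulBasis ε hcomm, gTau_single, gTau_single,
        gMul_single_single, smul_smul]
      congr 1
      ring

end Algebra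

theorem gTau_antiInvolution_general (N : ℕ) (Q : AddSubgroup (Fin N → ℤ))
    (ε : (Fin N → ℤ) → (Fin N → ℤ) → ℂ)
    (hcomm : ∀ α ∈ Q, ∀ β ∈ Q, ε α β = (-1 : ℂ) ^ form α β * ε β α) :
    (∀ x y : GAlg N Q, gTau (gMul ε x y) = gMul ε (gTau y) (gTau x)) ∧
      (∀ x : GAlg N Q, gTau (gTau x) = x) :=
  ⟨gTau_gMul ε hcomm, gTau_gTau⟩

/-- The map `τ` is an anti-involution of the associative algebra `G(Q)`:
`τ(xy) = τ(y)τ(x)` and `τ² = Id`. -/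
theorem gTau_antiInvolution (N : ℕ) (Q : AddSubgroup (Fin N → ℤ))
    (hQeven : ∀ α ∈ Q, Even (form α α))
    (ε : (Fin N → ℤ) → (Fin N → ℤ) → ℂ)
    (hεne : ∀ α ∈ Q, ∀ β ∈ Q, ε α β ≠ 0)
    (hcoc : ∀ α ∈ Q, ∀ β ∈ Q, ∀ γ ∈ Q,
      ε α β * ε (α + β) γ = ε β γ * ε α (β + γ))
    (hnorm : ε 0 0 = 1)
    (hcomm : ∀ α ∈ Q, ∀ β ∈ Q, ε α β = (-1 : ℂ) ^ form α β * ε β α) :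
    (∀ x y : GAlg N Q, gTau (gMul ε x y) = gMul ε (gTau y) (gTau x)) ∧
      (∀ x : GAlg N Q, gTau (gTau x) = x) :=
  gTau_antiInvolution_general N Q ε hcomm
end

section
/- Let A be an associative algebra over ℂ with an invariant symmetric bilinear form ⟨,⟩_A, and let Γ ⊆ ℂ* be a subgroup. On the Lie algebra A(Γ) = A ⊗ ℂ_Γ with bracket [a⊗b, a'⊗b'] = aa' ⊗ bb' − a'a ⊗ b'b, the bilinear map ⟨a(c_1,n), b(c_2,r)⟩ := (n/(2m)) δ_{n+r,0} ⟨a,b⟩_A δ_{c_1 c_2, 1} c_1^r defines a 2-cocycle; that is, it is skew-symmetric on the relevant spanning elements and satisfies ⟨[x,y],z⟩ + ⟨[y,z],x⟩ + ⟨[z,x],y⟩ = 0. -/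
open Finset

/-- The Lie algebra `A(Γ) = A ⊗ ℂ_Γ`, modelled as finitely supported functions
`(ℤ × Γ) →₀ A`; the element `a ⊗ tⁿ T_c` is `single (n, c) a`. -/
abbrev AGamma (Γ : Subgroup ℂˣ) (A : Type*) [Ring A] [Algebra ℂ A] := (ℤ × Γ) →₀ A

/-- The bracket `[a ⊗ tⁿT_{c₁}, b ⊗ tʳT_{c₂}] = c₁ʳ (ab) ⊗ t^{n+r}T_{c₁c₂}
− c₂ⁿ (ba) ⊗ t^{n+r}T_{c₂c₁}` (note `c₁c₂ = c₂c₁`), extended bilinearly. -/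
noncomputable def aBracket (Γ : Subgroup ℂˣ) {A : Type*} [Ring A] [Algebra ℂ A]
    (x y : AGamma Γ A) : AGamma Γ A :=
  x.sum fun p a => y.sum fun q b =>
    Finsupp.single (p.1 + q.1, p.2 * q.2)
      (((((p.2 : ℂˣ) : ℂ) ^ q.1) • (a * b)) - ((((q.2 : ℂˣ) : ℂ) ^ p.1) • (b * a)))

/-- The bilinear form
`⟨a(c₁,n), b(c₂,r)⟩ = (n/(2m)) δ_{n+r,0} ⟨a,b⟩_A δ_{c₁c₂,1} c₁ʳ` on `A(Γ)`. -/
noncomputable def aForm (Γ : Subgroup ℂˣ) {A : Type*} [Ring A] [Algebra ℂ A]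
    (m : ℕ) (B : A →ₗ[ℂ] A →ₗ[ℂ] ℂ) (x y : AGamma Γ A) : ℂ :=
  x.sum fun p a => y.sum fun q b =>
    if p.1 + q.1 = 0 ∧ p.2 * q.2 = 1 then
      ((p.1 : ℂ) / (2 * (m : ℂ))) * B a b * (((p.2 : ℂˣ) : ℂ) ^ q.1)
    else 0

/-! Both `aForm` and `aBracket` are biadditive, so the cyclic sum
`⟨[x,y],z⟩ + ⟨[y,z],x⟩ + ⟨[z,x],y⟩` is additive in each variable; as it is also invariant
under rotating `(x, y, z)`, it suffices that it vanishes on `a(c₁,n), b(c₂,r), d(c₃,l)`.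
All three terms vanish unless `n + r + l = 0` and `c₁c₂c₃ = 1`. In that case invariance and
symmetry of `⟨,⟩_A` turn every term into a multiple of `⟨ab,d⟩_A` or `⟨ba,d⟩_A`, the three
phase factors in front of each of them coincide, and the coefficients add up to
`2(n + r + l)/(2m) = 0`. Skew-symmetry is the same computation with `r = -n`, `c₂ = c₁⁻¹`. -/

namespace Finsupp

section

variable {α M N : Type*} [AddZeroClass M] [AddCommMonoid N]

theorem sum_sum_add_left {g : α → α → M → M → N} (hzero : ∀ p q b, g p q 0 b = 0)
    (hadd : ∀ p q a₁ a₂ b, g p q (a₁ + a₂) b = g p q a₁ b + g p q a₂ b)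
    (x₁ x₂ y : α →₀ M) :
    ((x₁ + x₂).sum fun p a => y.sum fun q b => g p q a b) =
      (x₁.sum fun p a => y.sum fun q b => g p q a b) +
        x₂.sum fun p a => y.sum fun q b => g p q a b :=
  sum_add_index' (fun _ => by simp [hzero]) fun _ _ _ => by simp [hadd, sum_add]

theorem sum_sum_add_right {g : α → α → M → M → N} (hzero : ∀ p q a, g p q a 0 = 0)
    (hadd : ∀ p q a b₁ b₂, g p q a (b₁ + b₂) = g p q a b₁ + g p q a b₂)
    (x y₁ y₂ : α →₀ M) :
    (x.sum fun p a => (y₁ + y₂).sum fun q b => g p q a b) =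
      (x.sum fun p a => y₁.sum fun q b => g p q a b) +
        x.sum fun p a => y₂.sum fun q b => g p q a b := by
  simp only [← sum_add]
  exact sum_congr fun p _ => sum_add_index' (fun q => hzero p q _) fun q => hadd p q _

end

theorem eq_zero_of_rotate_of_add_left {α M N : Type*} [AddZeroClass M] [AddCommGroup N]
    {f : (α →₀ M) → (α →₀ M) → (α →₀ M) → N}
    (hrot : ∀ x y z, f x y z = f y z x)
    (hadd : ∀ x₁ x₂ y z, f (x₁ + x₂) y z = f x₁ y z + f x₂ y z)
    (hsingle : ∀ p q s a b c, f (single p a) (single q b) (single s c) = 0)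
    (x y z : α →₀ M) : f x y z = 0 := by
  have hzero : ∀ y z, f 0 y z = 0 := fun y z => by simpa using hadd 0 0 y z
  have h_last_two : ∀ x q b s c, f x (single q b) (single s c) = 0 := fun x q b s c => by
    induction x using induction_linear with
    | zero => exact hzero _ _
    | add x₁ x₂ ih₁ ih₂ => rw [hadd, ih₁, ih₂, add_zero]
    | single p a => exact hsingle p q s a b c
  have h_last : ∀ x y s c, f x y (single s c) = 0 := fun x y s c => by
    rw [hrot]
    induction y using induction_linear with
    | zero => exact hzero _ _
    | add y₁ y₂ ih₁ ih₂ => rw [hadd, ih₁, ih₂, add_zero]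
    | single q b => rw [hrot, hrot, h_last_two]
  rw [← hrot]
  induction z using induction_linear with
  | zero => exact hzero _ _
  | add z₁ z₂ ih₁ ih₂ => rw [hadd, ih₁, ih₂, add_zero]
  | single s c => rw [hrot, h_last]

end Finsupp

theorem zpow_mul_zpow_rotate {G : Type*} [CommGroup G] {x y z : G} {n r l : ℤ}
    (h : x * y * z = 1) (hs : n + r + l = 0) :
    x ^ r * (x * y) ^ l = y ^ l * (y * z) ^ n := by
  rw [show y * z = x⁻¹ from eq_inv_of_mul_eq_one_right (by rw [← mul_assoc, h]), mul_zpow,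
    ← mul_assoc, ← zpow_add, show r + l = -n by omega, inv_zpow', mul_comm]

theorem units_zpow_cyclic_sum_eq_zero {K : Type*} [Field K] {x y z : Kˣ} {n r l : ℤ}
    (h : x * y * z = 1) (hs : n + r + l = 0) (M X Y : K) :
    (n + r) / M * (x ^ r * X - y ^ n * Y) * (x * y) ^ l
      + (r + l) / M * (y ^ l * X - z ^ r * Y) * (y * z) ^ n
      + (l + n) / M * (z ^ n * X - x ^ l * Y) * (z * x) ^ r = 0 := by
  have phase : ∀ {u v w : Kˣ} {i j k : ℤ}, u * v * w = 1 → i + j + k = 0 →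
      (u : K) ^ j * (u * v) ^ k = (v : K) ^ k * (v * w) ^ i := fun h hs => by
    simpa using congrArg Units.val (zpow_mul_zpow_rotate h hs)
  -- `e₁, e₂` say the phases multiplying `X` in the three terms agree, `f₁, f₂` the same for `Y`.
  have e₁ := phase h hs
  have e₂ := phase (by rw [← h]; ac_rfl : y * z * x = 1) (by omega : r + l + n = 0)
  have f₁ := phase (by rw [← h]; ac_rfl : z * y * x = 1) (by omega : l + r + n = 0)
  have f₂ := phase (by rw [← h]; ac_rfl : y * x * z = 1) (by omega : r + n + l = 0)
  rw [mul_comm (z : K) y, mul_comm (y : K) x] at f₁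
  rw [mul_comm (y : K) x, mul_comm (x : K) z] at f₂
  have hs' : (n : K) + r + l = 0 := by simpa using congrArg (Int.cast : ℤ → K) hs
  linear_combination ((n + r) / M * X) * e₁ + ((n + 2 * r + l) / M * X) * e₂
    - ((r + l) / M * Y) * f₁ - ((n + 2 * r + l) / M * Y) * f₂
    + (2 * (X * (z ^ n * (z * x) ^ r) - Y * (x ^ l * (z * x) ^ r)) / M) * hs'

section AGamma

variable (Γ : Subgroup ℂˣ) {A : Type*} [Ring A] [Algebra ℂ A] (m : ℕ)
  (B : A →ₗ[ℂ] A →ₗ[ℂ] ℂ)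

theorem aForm_single (p q : ℤ × Γ) (a b : A) :
    aForm Γ m B (Finsupp.single p a) (Finsupp.single q b) =
      if p.1 + q.1 = 0 ∧ p.2 * q.2 = 1 then
        ((p.1 : ℂ) / (2 * (m : ℂ))) * B a b * (((p.2 : ℂˣ) : ℂ) ^ q.1)
      else 0 := by
  simp [aForm]

theorem aBracket_single (p q : ℤ × Γ) (a b : A) :
    aBracket Γ (Finsupp.single p a) (Finsupp.single q b) =
      Finsupp.single (p.1 + q.1, p.2 * q.2)
        ((((p.2 : ℂˣ) : ℂ) ^ q.1) • (a * b) - (((q.2 : ℂˣ) : ℂ) ^ p.1) • (b * a)) := by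
  simp [aBracket]

theorem aForm_add_left (x₁ x₂ y : AGamma Γ A) :
    aForm Γ m B (x₁ + x₂) y = aForm Γ m B x₁ y + aForm Γ m B x₂ y :=
  Finsupp.sum_sum_add_left (fun _ _ _ => by simp)
    (fun _ _ _ _ _ => by split_ifs <;> simp [add_mul, mul_add]) x₁ x₂ y

theorem aForm_add_right (x y₁ y₂ : AGamma Γ A) :
    aForm Γ m B x (y₁ + y₂) = aForm Γ m B x y₁ + aForm Γ m B x y₂ :=
  Finsupp.sum_sum_add_right (fun _ _ _ => by simp)
    (fun _ _ _ _ _ => by split_ifs <;> simp [add_mul, mul_add]) x y₁ y₂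

theorem aBracket_add_left (x₁ x₂ y : AGamma Γ A) :
    aBracket Γ (x₁ + x₂) y = aBracket Γ x₁ y + aBracket Γ x₂ y :=
  Finsupp.sum_sum_add_left (fun _ _ _ => by simp)
    (fun _ _ _ _ _ => by
      rw [← Finsupp.single_add]; congr 1; simp only [add_mul, mul_add, smul_add]; abel) x₁ x₂ y

theorem aBracket_add_right (x y₁ y₂ : AGamma Γ A) :
    aBracket Γ x (y₁ + y₂) = aBracket Γ x y₁ + aBracket Γ x y₂ :=
  Finsupp.sum_sum_add_right (fun _ _ _ => by simp)
    (fun _ _ _ _ _ => by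
      rw [← Finsupp.single_add]; congr 1; simp only [add_mul, mul_add, smul_add]; abel) x y₁ y₂

theorem aForm_single_swap (hsymm : ∀ a b : A, B a b = B b a) (p q : ℤ × Γ) (a b : A) :
    aForm Γ m B (Finsupp.single p a) (Finsupp.single q b) =
      -aForm Γ m B (Finsupp.single q b) (Finsupp.single p a) := by
  obtain ⟨n, x⟩ := p
  obtain ⟨r, y⟩ := q
  simp only [aForm_single, add_comm r, mul_comm y]
  split_ifs with h
  swap
  · simp
  obtain ⟨hsum, hprod⟩ := h
  obtain rfl : r = -n := by omega
  obtain rfl : y = x⁻¹ := eq_inv_of_mul_eq_one_right hprod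
  push_cast
  rw [hsymm b, inv_zpow, zpow_neg]
  ring

noncomputable def aFormCyclicSum (x y z : AGamma Γ A) : ℂ :=
  aForm Γ m B (aBracket Γ x y) z + aForm Γ m B (aBracket Γ y z) x
    + aForm Γ m B (aBracket Γ z x) y

theorem aFormCyclicSum_rotate (x y z : AGamma Γ A) :
    aFormCyclicSum Γ m B x y z = aFormCyclicSum Γ m B y z x :=
  add_rotate _ _ _

theorem aFormCyclicSum_add_left (x₁ x₂ y z : AGamma Γ A) :
    aFormCyclicSum Γ m B (x₁ + x₂) y z =
      aFormCyclicSum Γ m B x₁ y z + aFormCyclicSum Γ m B x₂ y z := by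
  simp only [aFormCyclicSum, aBracket_add_left, aBracket_add_right, aForm_add_left,
    aForm_add_right]
  abel

theorem aFormCyclicSum_single (hsymm : ∀ a b : A, B a b = B b a)
    (hinv : ∀ a b c : A, B (a * b) c = B a (b * c)) (p q s : ℤ × Γ) (a b c : A) :
    aFormCyclicSum Γ m B (Finsupp.single p a) (Finsupp.single q b) (Finsupp.single s c) = 0 := by
  obtain ⟨n, x⟩ := p
  obtain ⟨r, y⟩ := q
  obtain ⟨l, z⟩ := s
  have hcond_yzx : (r + l + n = 0 ∧ y * z * x = 1) ↔ (n + r + l = 0 ∧ x * y * z = 1) := by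
    rw [add_rotate n, mul_rotate x]
  have hcond_zxy : (l + n + r = 0 ∧ z * x * y = 1) ↔ (n + r + l = 0 ∧ x * y * z = 1) := by
    rw [add_rotate l, mul_rotate z]
  simp only [aFormCyclicSum, aBracket_single, aForm_single, hcond_yzx, hcond_zxy]
  split_ifs with h
  swap
  · simp
  obtain ⟨hsum, hprod⟩ := h
  have hrot : ∀ a b c : A, B (a * b) c = B (b * c) a := fun a b c => by rw [hinv, hsymm]
  simp only [map_sub, map_smul, LinearMap.sub_apply, LinearMap.smul_apply, smul_eq_mul,
    ← hrot a, hrot c, hrot b a c]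
  push_cast
  exact units_zpow_cyclic_sum_eq_zero (by exact_mod_cast hprod) hsum _ _ _

end AGamma

theorem aForm_isTwoCocycle_general (Γ : Subgroup ℂˣ) (A : Type*) [Ring A] [Algebra ℂ A]
    (m : ℕ) (B : A →ₗ[ℂ] A →ₗ[ℂ] ℂ)
    (hsymm : ∀ a b : A, B a b = B b a)
    (hinv : ∀ a b c : A, B (a * b) c = B a (b * c)) :
    (∀ (p q : ℤ × Γ) (a b : A),
        aForm Γ m B (Finsupp.single p a) (Finsupp.single q b)
          = - aForm Γ m B (Finsupp.single q b) (Finsupp.single p a)) ∧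
      (∀ x y z : AGamma Γ A,
        aForm Γ m B (aBracket Γ x y) z + aForm Γ m B (aBracket Γ y z) x
          + aForm Γ m B (aBracket Γ z x) y = 0) :=
  ⟨aForm_single_swap Γ m B hsymm,
    Finsupp.eq_zero_of_rotate_of_add_left (aFormCyclicSum_rotate Γ m B)
      (aFormCyclicSum_add_left Γ m B) (aFormCyclicSum_single Γ m B hsymm hinv)⟩

/-- If `⟨,⟩_A` is a symmetric invariant bilinear form on the associative algebra `A`,
then the bilinear form `⟨a(c₁,n), b(c₂,r)⟩ = (n/(2m)) δ_{n+r,0} ⟨a,b⟩_A δ_{c₁c₂,1} c₁ʳ`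
is a 2-cocycle on the Lie algebra `A(Γ)`: it is skew-symmetric on the spanning
elements, and `⟨[x,y],z⟩ + ⟨[y,z],x⟩ + ⟨[z,x],y⟩ = 0`. -/
theorem aForm_isTwoCocycle (Γ : Subgroup ℂˣ) (A : Type*) [Ring A] [Algebra ℂ A]
    (m : ℕ) (hm : 0 < m) (B : A →ₗ[ℂ] A →ₗ[ℂ] ℂ)
    (hsymm : ∀ a b : A, B a b = B b a)
    (hinv : ∀ a b c : A, B (a * b) c = B a (b * c)) :
    (∀ (p q : ℤ × Γ) (a b : A),
        aForm Γ m B (Finsupp.single p a) (Finsupp.single q b)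
          = - aForm Γ m B (Finsupp.single q b) (Finsupp.single p a)) ∧
      (∀ x y z : AGamma Γ A,
        aForm Γ m B (aBracket Γ x y) z + aForm Γ m B (aBracket Γ y z) x
          + aForm Γ m B (aBracket Γ z x) y = 0) :=
  aForm_isTwoCocycle_general Γ A m B hsymm hinv
end

section
/- Take t_i = ω^{−i} and a_i = ⟨ν^i α, β⟩ for 1 ≤ i ≤ m, where ω is a primitive m-th root of unity and ν an isometry of the even lattice Q of order m. If r ∈ ℤ_m satisfies ⟨ν^r α, β⟩ = −2, then ∑_{p ∈ ℤ_m, p≠r} ⟨ν^p α, β⟩ = ∑_{p ∈ ℤ_m, p≠0} ⟨(ν^p + ν^{−p}) ν^r α, β⟩ / (1 − ω^p). -/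
/-!
Pair `p` with `m - p`: since `ω^(m - p) = (ω^p)⁻¹`, the weights `1 / (1 - x)` and `1 / (1 - x⁻¹)`
add up to `1`, so the right-hand side collapses to the sum of `⟨ν^(r + p) α, β⟩` over `p ≠ 0`,
which by `m`-periodicity in the exponent is the left-hand side.
-/

open Finset

theorem Finset.sum_Ioo_zero_reflect {M : Type*} [AddCommMonoid M] (f : ℕ → M) (m : ℕ) :
    ∑ p ∈ Ioo 0 m, f (m - p) = ∑ p ∈ Ioo 0 m, f p :=
  sum_nbij' (m - ·) (m - ·) (by simp only [mem_Ioo]; omega) (by simp only [mem_Ioo]; omega)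
    (by simp only [mem_Ioo]; omega) (by simp only [mem_Ioo]; omega) fun _ _ => rfl

namespace Function.Periodic

variable {M : Type*} [AddCommGroup M] {f : ℕ → M} {m : ℕ}

theorem sum_range_add (hf : Periodic f m) (r : ℕ) :
    ∑ p ∈ range m, f (p + r) = ∑ p ∈ range m, f p := by
  induction r with
  | zero => rfl
  | succ r ih =>
    have hshift := sum_range_succ' (fun p => f (p + r)) m
    rw [sum_range_succ, zero_add, add_comm m, hf, add_right_cancel_iff] at hshift
    simp only [← ih, hshift, add_right_comm _ 1 r, add_assoc]

theorem sum_Ioo_add_eq_sum_range_erase (hf : Periodic f m) {r : ℕ} (hr : r < m) :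
    ∑ p ∈ Ioo 0 m, f (p + r) = ∑ p ∈ (range m).erase r, f p := by
  have hIoo : Ioo 0 m = (range m).erase 0 := by
    ext p
    simp only [mem_Ioo, mem_erase, mem_range]
    omega
  rw [hIoo, sum_erase_eq_sub (mem_range.2 (by omega)), sum_erase_eq_sub (mem_range.2 hr),
    hf.sum_range_add, zero_add]

end Function.Periodic

namespace IsPrimitiveRoot

variable {K : Type*} [Field K] {ω : K} {m : ℕ}

theorem inv_one_sub_pow_add_inv_one_sub_pow_sub (hω : IsPrimitiveRoot ω m) {p : ℕ}
    (hp : p ∈ Ioo 0 m) : (1 - ω ^ p)⁻¹ + (1 - ω ^ (m - p))⁻¹ = 1 := by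
  obtain ⟨hp0, hpm⟩ := mem_Ioo.1 hp
  have hne : ∀ q, 0 < q → q < m → 1 - ω ^ q ≠ 0 := fun q hq0 hqm =>
    sub_ne_zero.2 (hω.pow_ne_one_of_pos_of_lt hq0.ne' hqm).symm
  have hinv : ω ^ p * ω ^ (m - p) = 1 := by
    rw [← pow_add, Nat.add_sub_cancel' hpm.le, hω.pow_eq_one]
  field_simp [hne p hp0 hpm, hne (m - p) (by omega) (by omega)]
  linear_combination -hinv

theorem sum_add_reflect_div_one_sub_pow (hω : IsPrimitiveRoot ω m) (b : ℕ → K) :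
    ∑ p ∈ Ioo 0 m, (b p + b (m - p)) / (1 - ω ^ p) = ∑ p ∈ Ioo 0 m, b p := by
  calc ∑ p ∈ Ioo 0 m, (b p + b (m - p)) / (1 - ω ^ p)
      = ∑ p ∈ Ioo 0 m, b p / (1 - ω ^ p)
          + ∑ p ∈ Ioo 0 m, b (m - p) / (1 - ω ^ (m - (m - p))) := by
        rw [← sum_add_distrib]
        refine sum_congr rfl fun p hp => ?_
        rw [Nat.sub_sub_self (mem_Ioo.1 hp).2.le, add_div]
    _ = ∑ p ∈ Ioo 0 m, b p / (1 - ω ^ p) + ∑ p ∈ Ioo 0 m, b p / (1 - ω ^ (m - p)) := by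
        rw [sum_Ioo_zero_reflect fun q => b q / (1 - ω ^ (m - q))]
    _ = ∑ p ∈ Ioo 0 m, b p := by
        rw [← sum_add_distrib]
        refine sum_congr rfl fun p hp => ?_
        rw [div_eq_mul_inv, div_eq_mul_inv, ← mul_add,
          hω.inv_one_sub_pow_add_inv_one_sub_pow_sub hp, mul_one]

end IsPrimitiveRoot

namespace AddAut

variable {A : Type*} [Add A]

theorem nsmul_apply_nsmul_apply (ν : AddAut A) (p r : ℕ) (x : A) :
    (p • ν) ((r • ν) x) = ((p + r) • ν) x := by
  rw [add_nsmul]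
  rfl

theorem neg_natCast_zsmul_eq_sub_nsmul {ν : AddAut A} {m : ℕ} (hν : m • ν = 0) {p : ℕ}
    (hp : p ≤ m) : (-(p : ℤ)) • ν = (m - p) • ν := by
  rw [neg_zsmul, natCast_zsmul, neg_eq_iff_add_eq_zero, ← add_nsmul, Nat.add_sub_cancel' hp, hν]

end AddAut

theorem sum_form_eq_sum_div_general (N m : ℕ) (ω : ℂ)
    (hω : IsPrimitiveRoot ω m)
    (ν : AddAut (Fin N → ℤ))
    (hord : m • ν = 0)
    (α : Fin N → ℤ) (β : Fin N → ℤ)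
    (r : ℕ) (hr : r < m) :
    ((∑ p ∈ (Finset.range m).erase r, form ((p • ν) α) β : ℤ) : ℂ)
      = ∑ p ∈ Finset.Ioo 0 m,
          ((form ((p • ν) ((r • ν) α)) β
              + form (((-(p : ℤ)) • ν) ((r • ν) α)) β : ℤ) : ℂ)
            / (1 - ω ^ p) := by
  set a : ℕ → ℂ := fun p => (form ((p • ν) α) β : ℂ)
  have ha : Function.Periodic a m := fun p => by simp only [a, add_nsmul, hord, add_zero]
  have hsummand : ∀ p ∈ Ioo 0 m,
      ((form ((p • ν) ((r • ν) α)) β + form (((-(p : ℤ)) • ν) ((r • ν) α)) β : ℤ) : ℂ)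
        = a (p + r) + a (m - p + r) := fun p hp => by
    rw [AddAut.nsmul_apply_nsmul_apply, AddAut.neg_natCast_zsmul_eq_sub_nsmul hord
      (mem_Ioo.1 hp).2.le, AddAut.nsmul_apply_nsmul_apply, Int.cast_add]
  calc ((∑ p ∈ (range m).erase r, form ((p • ν) α) β : ℤ) : ℂ)
      = ∑ p ∈ Ioo 0 m, a (p + r) := by rw [Int.cast_sum, ha.sum_Ioo_add_eq_sum_range_erase hr]
    _ = ∑ p ∈ Ioo 0 m, (a (p + r) + a (m - p + r)) / (1 - ω ^ p) :=
        (hω.sum_add_reflect_div_one_sub_pow fun p => a (p + r)).symm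
    _ = _ := sum_congr rfl fun p hp => by rw [hsummand p hp]

/-- If `r ∈ ℤ_m` satisfies `⟨ν^r α, β⟩ = −2`, then
`∑_{p ∈ ℤ_m, p ≠ r} ⟨ν^p α, β⟩ = ∑_{p ∈ ℤ_m, p ≠ 0} ⟨(ν^p + ν^{−p})ν^r α, β⟩/(1 − ω^p)`,
where `ω` is a primitive `m`-th root of unity and `ν` an isometry of the even
lattice `Q` with `ν^m = Id`. -/
theorem sum_form_eq_sum_div (N m : ℕ) (hm : 0 < m) (ω : ℂ)
    (hω : IsPrimitiveRoot ω m)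
    (Q : AddSubgroup (Fin N → ℤ))
    (hQeven : ∀ α ∈ Q, Even (form α α))
    (ν : AddAut (Fin N → ℤ))
    (hiso : ∀ α β, form (ν α) (ν β) = form α β)
    (hνQ : ∀ α ∈ Q, ν α ∈ Q)
    (hord : m • ν = 0)
    (α : Fin N → ℤ) (hα : α ∈ Q) (β : Fin N → ℤ) (hβ : β ∈ Q)
    (r : ℕ) (hr : r < m) (h2 : form ((r • ν) α) β = -2) :
    ((∑ p ∈ (Finset.range m).erase r, form ((p • ν) α) β : ℤ) : ℂ)
      = ∑ p ∈ Finset.Ioo 0 m,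
          ((form ((p • ν) ((r • ν) α)) β
              + form (((-(p : ℤ)) • ν) ((r • ν) α)) β : ℤ) : ℂ)
            / (1 - ω ^ p) :=
  sum_form_eq_sum_div_general N m ω hω ν hord α β r hr
end
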